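/- Let A be a Hopf algebra, B a left coideal subalgebra, and δ an equivariant derivation of B. Then the kernel of the map ι : B⁺ → Γ(δ)/(B⁺Γ(δ)) sending c to the class of δc equals R_δ = {Σᵢ ε(aᵢ)bᵢ⁺ : Σᵢ aᵢ δbᵢ = 0}. -/
import Mathlib


open TensorProduct

noncomputable section

/-- A derivation of an algebra `B` into a `B`-bimodule `M`. -/
structure BimodDeriv (B M : Type) [Ring B] [Algebra ℂ B]
    [AddCommGroup M] [Module ℂ M] where
  l : B →ₗ[ℂ] M →ₗ[ℂ] M
  r : B →ₗ[ℂ] M →ₗ[ℂ] M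
  l_mul : ∀ a b m, l (a * b) m = l a (l b m)
  l_one : ∀ m, l 1 m = m
  r_mul : ∀ a b m, r (a * b) m = r b (r a m)
  r_one : ∀ m, r 1 m = m
  lr_comm : ∀ a b m, l a (r b m) = r b (l a m)
  d : B →ₗ[ℂ] M
  leibniz : ∀ a b, d (a * b) = l a (d b) + r b (d a)

variable (A : Type) [Ring A] [HopfAlgebra ℂ A] (B : Subalgebra ℂ A)

/-- The counit of `A` restricted to `B`. -/
def epsB : ↥B →ₐ[ℂ] ℂ := (Bialgebra.counitAlgHom ℂ A).comp B.val

/-- `b ↦ b⁺ = b − ε(b)1` on `B`. -/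
def plusB : ↥B →ₗ[ℂ] ↥B :=
  LinearMap.id - (Algebra.linearMap ℂ ↥B).comp (epsB A B).toLinearMap

variable (comulB : ↥B →ₗ[ℂ] A ⊗[ℂ] ↥B)

/-- The Sweedler-type map `a ⊗ b ↦ a₍₁₎b₍₁₎ ⊗ a₍₂₎·δ(b₍₂₎)`. -/
def sweedlerMap {M : Type} [AddCommGroup M] [Module ℂ M]
    (δ : BimodDeriv ↥B M) : ↥B ⊗[ℂ] ↥B →ₗ[ℂ] A ⊗[ℂ] M :=
  (TensorProduct.map (LinearMap.mul' ℂ A)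
      (TensorProduct.lift
        (LinearMap.mk₂ ℂ (fun a b => δ.l a (δ.d b))
          (fun a a' b => by simp)
          (fun c a b => by simp)
          (fun a b b' => by simp)
          (fun c a b => by simp)))) ∘ₗ
    (TensorProduct.tensorTensorTensorComm ℂ A ↥B A ↥B).toLinearMap ∘ₗ
    (TensorProduct.map comulB comulB)

/-- Equivariance of a derivation of the left coideal subalgebra `B`. -/
def IsEquivariant {M : Type} [AddCommGroup M] [Module ℂ M]
    (δ : BimodDeriv ↥B M) : Prop :=
  ∀ L : List (↥B × ↥B),
    (L.map fun p => δ.l p.1 (δ.d p.2)).sum = 0 →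
    (L.map fun p => sweedlerMap A B comulB δ (p.1 ⊗ₜ[ℂ] p.2)).sum = 0

/-- `R_δ = { Σᵢ ε(aᵢ)bᵢ⁺ : Σᵢ aᵢ·δ(bᵢ) = 0 }`. -/
def RdeltaSet {M : Type} [AddCommGroup M] [Module ℂ M]
    (δ : BimodDeriv ↥B M) : Set ↥B :=
  {x | ∃ L : List (↥B × ↥B),
    (L.map fun p => δ.l p.1 (δ.d p.2)).sum = 0 ∧
    x = (L.map fun p => epsB A B p.1 • plusB A B p.2).sum}

section Aux

variable {B' : Type} [Ring B'] [Algebra ℂ B'] {M : Type} [AddCommGroup M] [Module ℂ M]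

/-- Elements expressible as `Σ l aᵢ (d bᵢ)` with all `aᵢ` satisfying `P`, as a submodule. -/
def listSet (δ : BimodDeriv B' M) (P : B' → Prop)
    (hPsmul : ∀ (r : ℂ) a, P a → P (r • a)) : Submodule ℂ M where
  carrier := {m | ∃ L : List (B' × B'), (∀ p ∈ L, P p.1) ∧
    m = (L.map fun p => δ.l p.1 (δ.d p.2)).sum}
  zero_mem' := ⟨[], by simp, by simp⟩
  add_mem' := by
    rintro a b ⟨L1, h1, rfl⟩ ⟨L2, h2, rfl⟩
    refine ⟨L1 ++ L2, ?_, by simp⟩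
    intro p hp
    rcases List.mem_append.1 hp with h | h
    exacts [h1 p h, h2 p h]
  smul_mem' := by
    rintro r m ⟨L, h, rfl⟩
    refine ⟨L.map fun p => (r • p.1, p.2), ?_, ?_⟩
    · intro p hp
      simp only [List.mem_map] at hp
      obtain ⟨q, hq, rfl⟩ := hp
      exact hPsmul r q.1 (h q hq)
    · induction L with
      | nil => simp
      | cons hd tl ih =>
        have htl : ∀ p ∈ tl, P p.1 := fun p hp => h p (List.mem_cons_of_mem _ hp)
        simp only [List.map_cons, List.map_map, List.sum_cons, smul_add] at ih ⊢
        rw [ih htl, map_smul]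
        rfl

lemma d_one (δ : BimodDeriv B' M) : δ.d 1 = 0 := by
  have h := δ.leibniz 1 1
  rw [mul_one, δ.l_one, δ.r_one] at h
  have h2 : δ.d 1 + δ.d 1 = δ.d 1 + 0 := by rw [add_zero]; exact h.symm
  exact add_left_cancel h2

lemma l_sum_eq (δ : BimodDeriv B' M) (c : B') (L : List (B' × B')) :
    δ.l c (L.map fun p => δ.l p.1 (δ.d p.2)).sum
      = ((L.map fun p => (c * p.1, p.2)).map fun p => δ.l p.1 (δ.d p.2)).sum := by
  induction L with
  | nil => simp
  | cons hd tl ih =>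
    simp only [List.map_cons, List.sum_cons, map_add, ih, δ.l_mul]

lemma neg_sum_eq (δ : BimodDeriv B' M) (L : List (B' × B')) :
    ((L.map fun p => (-p.1, p.2)).map fun p => δ.l p.1 (δ.d p.2)).sum
      = -(L.map fun p => δ.l p.1 (δ.d p.2)).sum := by
  induction L with
  | nil => simp
  | cons hd tl ih =>
    simp only [List.map_cons, List.sum_cons, ih, map_neg, LinearMap.neg_apply, neg_add]

end Aux

/-- Let `δ` be an equivariant derivation of the left coideal
subalgebra `B`.  Let `Γ(δ)` be the span of the elements `a·δb` and
`B⁺Γ(δ)` the span of the products `c·ω` with `c ∈ B⁺`, `ω ∈ Γ(δ)`.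
Then the kernel of `ι : B⁺ → Γ(δ)/(B⁺Γ(δ))`, `c ↦ [δc]`, is exactly `R_δ`:
for `c ∈ B⁺`, `δc ∈ B⁺Γ(δ)` iff `c ∈ R_δ`. -/
theorem ker_iota_eq_Rdelta
    (hcomulB : ∀ b : ↥B,
      (TensorProduct.map LinearMap.id B.val.toLinearMap) (comulB b)
        = Coalgebra.comul (b : A))
    {M : Type} [AddCommGroup M] [Module ℂ M]
    (δ : BimodDeriv ↥B M)
    (hequi : IsEquivariant A B comulB δ) :
    let Γ : Submodule ℂ M :=
      Submodule.span ℂ {m | ∃ a b : ↥B, m = δ.l a (δ.d b)}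
    let K : Submodule ℂ M :=
      Submodule.span ℂ {m | ∃ c : ↥B, epsB A B c = 0 ∧ ∃ ω ∈ Γ, m = δ.l c ω}
    ∀ c : ↥B, epsB A B c = 0 → (δ.d c ∈ K ↔ c ∈ RdeltaSet A B δ) := by
  intro Γ K c hc
  -- useful facts
  have hplus : ∀ b : ↥B, plusB A B b = b - algebraMap ℂ ↥B (epsB A B b) := fun b => rfl
  have hplus_c : plusB A B c = c := by rw [hplus, hc, map_zero, sub_zero]
  have hd_plus : ∀ b : ↥B, δ.d (plusB A B b) = δ.d b := by
    intro b
    rw [hplus, map_sub, Algebra.algebraMap_eq_smul_one, map_smul, d_one, smul_zero, sub_zero]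
  have heps_plus : ∀ b : ↥B, epsB A B (plusB A B b) = 0 := by
    intro b
    rw [hplus, map_sub, AlgHom.commutes, Algebra.algebraMap_self_apply, sub_self]
  -- the two auxiliary submodules
  have hsmulP : ∀ (r : ℂ) (a : ↥B), epsB A B a = 0 → epsB A B (r • a) = 0 := by
    intro r a ha; rw [map_smul, ha, smul_zero]
  set S1 : Submodule ℂ M := listSet δ (fun _ => True) (fun _ _ _ => trivial) with hS1
  set S2 : Submodule ℂ M := listSet δ (fun x => epsB A B x = 0) hsmulP with hS2
  have hΓ : Γ ≤ S1 := by
    rw [Submodule.span_le]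
    rintro m ⟨a, b, rfl⟩
    exact ⟨[(a, b)], by simp, by simp⟩
  have hK : K ≤ S2 := by
    rw [Submodule.span_le]
    rintro m ⟨c', hc', ω, hω, rfl⟩
    obtain ⟨L, -, rfl⟩ := hΓ hω
    refine ⟨L.map fun p => (c' * p.1, p.2), ?_, l_sum_eq δ c' L⟩
    intro p hp
    simp only [List.mem_map] at hp
    obtain ⟨q, hq, rfl⟩ := hp
    simp only [map_mul, hc', zero_mul]
  constructor
  · -- δ.d c ∈ K → c ∈ R_δ
    intro hmem
    obtain ⟨L, hL, hsum⟩ := hK hmem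
    refine ⟨(1, c) :: L.map fun p => (-p.1, p.2), ?_, ?_⟩
    · simp only [List.map_cons, List.sum_cons, δ.l_one]
      rw [neg_sum_eq, ← hsum, add_neg_cancel]
    · simp only [List.map_cons, List.sum_cons, List.map_map]
      have h0 : ((L.map fun p => (-p.1, p.2)).map
          fun p => epsB A B p.1 • plusB A B p.2).sum = 0 := by
        apply List.sum_eq_zero
        intro x hx
        simp only [List.map_map, List.mem_map, Function.comp] at hx
        obtain ⟨q, hq, rfl⟩ := hx
        rw [map_neg, hL q hq, neg_zero, zero_smul]
      rw [List.map_map] at h0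
      rw [h0, add_zero, map_one, one_smul, hplus_c]
  · -- c ∈ R_δ → δ.d c ∈ K
    rintro ⟨L, hL0, rfl⟩
    -- δ.d of the sum
    have hdc : δ.d (L.map fun p => epsB A B p.1 • plusB A B p.2).sum
        = (L.map fun p => epsB A B p.1 • δ.d p.2).sum := by
      rw [map_list_sum, List.map_map]
      congr 1
      apply List.map_congr_left
      intro p hp
      simp only [Function.comp, map_smul, hd_plus]
    rw [hdc]
    -- rewrite each term: ε(a) • d b = l a (d b) - l (plusB a) (d b)
    have hterm : ∀ p : ↥B × ↥B, epsB A B p.1 • δ.d p.2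
        = δ.l p.1 (δ.d p.2) - δ.l (plusB A B p.1) (δ.d p.2) := by
      intro p
      rw [hplus, map_sub, LinearMap.sub_apply, Algebra.algebraMap_eq_smul_one,
        map_smul, LinearMap.smul_apply, δ.l_one]
      abel
    have hsplit : ∀ L' : List (↥B × ↥B), (L'.map fun p => epsB A B p.1 • δ.d p.2).sum
        = (L'.map fun p => δ.l p.1 (δ.d p.2)).sum
          - (L'.map fun p => δ.l (plusB A B p.1) (δ.d p.2)).sum := by
      intro L'
      induction L' with
      | nil => simp
      | cons hd tl ih =>
        simp only [List.map_cons, List.sum_cons, ih, hterm hd]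
        abel
    rw [hsplit, hL0, zero_sub]
    apply neg_mem
    apply list_sum_mem
    intro p hp
    simp only [List.mem_map] at hp
    obtain ⟨q, hq, rfl⟩ := hp
    apply Submodule.subset_span
    exact ⟨plusB A B q.1, heps_plus q.1, δ.d q.2,
      Submodule.subset_span ⟨1, q.2, (δ.l_one _).symm⟩, rfl⟩

end
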